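/- arXiv:1011.1452 — 2 statements merged into one kernel-verified Lean document; each statement's English description precedes it below -/
import Mathlib

section
/- Let $d\ge 2$ and let $q_0,\dots,q_{N-1}$ be real numbers. Then there exists a nearest-neighbor path $S$ in $\mathbb{Z}^d$ starting at $0$ such that $H_N(S) = (Q_+^{\mathrm{odd}})^2+(Q_-^{\mathrm{odd}})^2+(Q_+^{\mathrm{even}})^2+(Q_-^{\mathrm{even}})^2$, so that this value is the maximum of $H_N$ over all nearest-neighbor paths. -/
/-!
A nearest-neighbour path alternates between sites of even and odd coordinate sum, so every
site carries charges of a single index parity. Splitting the charge at a site into its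
positive and negative parts `a, b ≥ 0`, the bounds `(a - b)² ≤ a² + b²` and
`∑ aₓ² ≤ (∑ aₓ)²` (for nonnegative terms) give `H_N ≤ ∑ (Q_ε^p)²`. Equality holds as soon as
each of the four classes (parity, sign) occupies its own site; when `d ≥ 2` the vertices of a
unit square do this, because each vertex is adjacent to both vertices of the other parity.
-/

open MeasureTheory Filter Finset Real
open scoped ENNReal

noncomputable section

/-- Total charge at site `x` for charges `q` and path `S`, among monomers `0 ≤ i < N`. -/
def Qof {d : ℕ} (N : ℕ) (q : ℕ → ℝ) (S : ℕ → Fin d → ℤ) (x : Fin d → ℤ) : ℝ :=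
  ∑ i ∈ Finset.range N, if S i = x then q i else 0

/-- Energy `H_N = ∑_x (Q_N^x)²` (the sum over all of `ℤ^d` reduces to visited sites). -/
def Hof {d : ℕ} (N : ℕ) (q : ℕ → ℝ) (S : ℕ → Fin d → ℤ) : ℝ :=
  ∑ x ∈ (Finset.range N).image S, (Qof N q S x) ^ 2

/-- `v` is a unit step in `ℤ^d`. -/
def IsUnitStep {d : ℕ} (v : Fin d → ℤ) : Prop := (∑ j, |v j|) = 1

/-- `S` is a nearest-neighbor path in `ℤ^d` starting at `0`. -/
def IsNNPath {d : ℕ} (S : ℕ → Fin d → ℤ) : Prop :=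
  S 0 = 0 ∧ ∀ i, IsUnitStep (fun j => S (i + 1) j - S i j)

/-- Positive (`s = true`) or negative (`s = false`) part of a real charge. -/
def Qsgn (s : Bool) (r : ℝ) : ℝ := if s then max r 0 else max (-r) 0

/-- `Q_ε^p`: total charge of sign `s` at indices of parity `p`
(`p = true` means odd). -/
def Qpar (N : ℕ) (q : ℕ → ℝ) (p : Bool) (s : Bool) : ℝ :=
  ∑ i ∈ Finset.range N, if i % 2 = (if p then 1 else 0) then Qsgn s (q i) else 0

def parCharge (q : ℕ → ℝ) (p s : Bool) (i : ℕ) : ℝ :=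
  if i % 2 = (if p then 1 else 0) then Qsgn s (q i) else 0

lemma Qpar_eq_sum_parCharge (N : ℕ) (q : ℕ → ℝ) (p s : Bool) :
    Qpar N q p s = ∑ i ∈ range N, parCharge q p s i := rfl

lemma Qsgn_nonneg (s : Bool) (r : ℝ) : 0 ≤ Qsgn s r := by
  cases s <;> simp [Qsgn]

lemma parCharge_nonneg (q : ℕ → ℝ) (p s : Bool) (i : ℕ) : 0 ≤ parCharge q p s i := by
  unfold parCharge; split_ifs <;> simp [Qsgn_nonneg]

lemma Qsgn_true_sub_Qsgn_false (r : ℝ) : Qsgn true r - Qsgn false r = r :=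
  posPart_sub_negPart r

lemma mod_two_eq_ite_iff_bodd_eq (i : ℕ) (p : Bool) :
    i % 2 = (if p then 1 else 0) ↔ i.bodd = p := by
  rw [Nat.mod_two_of_bodd]; cases i.bodd <;> cases p <;> simp

lemma parCharge_decomp (q : ℕ → ℝ) :
    q = parCharge q true true - parCharge q true false +
      parCharge q false true - parCharge q false false := by
  funext i
  have := Qsgn_true_sub_Qsgn_false (q i)
  rcases Nat.mod_two_eq_zero_or_one i with h | h <;> simp [parCharge, h] <;> linarith

section Charges

variable {d N : ℕ} {S : ℕ → Fin d → ℤ}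

lemma Qof_nonneg {w : ℕ → ℝ} (hw : ∀ i, 0 ≤ w i) (x : Fin d → ℤ) : 0 ≤ Qof N w S x :=
  sum_nonneg fun i _ => by split_ifs <;> simp [hw]

lemma Qof_add (w w' : ℕ → ℝ) (x : Fin d → ℤ) :
    Qof N (w + w') S x = Qof N w S x + Qof N w' S x := by
  simp only [Qof, ← sum_add_distrib, Pi.add_apply, ite_add_ite, add_zero]

lemma Qof_sub (w w' : ℕ → ℝ) (x : Fin d → ℤ) :
    Qof N (w - w') S x = Qof N w S x - Qof N w' S x := by
  simp only [Qof, ← sum_sub_distrib, Pi.sub_apply, ite_sub_ite, sub_zero]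

lemma sum_Qof_image (w : ℕ → ℝ) :
    ∑ x ∈ (range N).image S, Qof N w S x = ∑ i ∈ range N, w i := by
  simp only [Qof]
  rw [sum_comm]
  exact sum_congr rfl fun i hi => by rw [sum_ite_eq, if_pos (mem_image_of_mem S hi)]

lemma sum_sq_Qof_le_sq {w : ℕ → ℝ} (hw : ∀ i, 0 ≤ w i) :
    ∑ x ∈ (range N).image S, Qof N w S x ^ 2 ≤ (∑ i ∈ range N, w i) ^ 2 :=
  sum_Qof_image (S := S) w ▸ sum_sq_le_sq_sum_of_nonneg fun x _ => Qof_nonneg hw x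

end Charges

lemma IsUnitStep.sum_emod_two {d : ℕ} {v : Fin d → ℤ} (hv : IsUnitStep v) :
    (∑ j, v j) % 2 = 1 := by
  have habs : (∑ j, v j) % 2 = (∑ j, |v j|) % 2 := by
    rw [sum_int_mod, sum_int_mod (f := fun j => |v j|)]
    congr 1
    exact sum_congr rfl fun j _ => by rcases abs_choice (v j) with h | h <;> omega
  rw [habs, hv]; rfl

lemma IsNNPath.sum_emod_two {d : ℕ} {S : ℕ → Fin d → ℤ} (hS : IsNNPath S) (i : ℕ) :
    (∑ j, S i j) % 2 = (i : ℤ) % 2 := by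
  induction i with
  | zero => simp [hS.1]
  | succ i ih =>
    have hstep := (hS.2 i).sum_emod_two
    rw [sum_sub_distrib] at hstep
    push_cast
    omega

section Path

variable {d N : ℕ} {S : ℕ → Fin d → ℤ}

lemma IsNNPath.Qof_parCharge_eq_zero (hS : IsNNPath S) (q : ℕ → ℝ) {p : Bool} (s : Bool)
    {x : Fin d → ℤ} (hx : (∑ j, x j) % 2 ≠ if p then 1 else 0) :
    Qof N (parCharge q p s) S x = 0 := by
  refine sum_eq_zero fun i _ => ite_eq_right_iff.mpr fun hi => if_neg fun hip => hx ?_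
  rw [← hi, hS.sum_emod_two]
  cases p <;> simp only [if_true, Bool.false_eq_true, if_false] at hip ⊢ <;> omega

lemma IsNNPath.sq_Qof_le (hS : IsNNPath S) (q : ℕ → ℝ) (x : Fin d → ℤ) :
    Qof N q S x ^ 2 ≤
      Qof N (parCharge q true true) S x ^ 2 + Qof N (parCharge q true false) S x ^ 2 +
        Qof N (parCharge q false true) S x ^ 2 + Qof N (parCharge q false false) S x ^ 2 := by
  have hnn := fun p s => Qof_nonneg (N := N) (S := S) (parCharge_nonneg q p s) x
  conv_lhs => rw [parCharge_decomp q, Qof_sub, Qof_add, Qof_sub]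
  have hzero (p s : Bool) (hx : (∑ j, x j) % 2 ≠ if p then 1 else 0) :=
    hS.Qof_parCharge_eq_zero (N := N) q s hx
  rcases Int.emod_two_eq_zero_or_one (∑ j, x j) with h | h
  · rw [hzero true true (by simp [h]), hzero true false (by simp [h])]
    nlinarith [hnn false true, hnn false false]
  · rw [hzero false true (by simp [h]), hzero false false (by simp [h])]
    nlinarith [hnn true true, hnn true false]

lemma IsNNPath.Hof_le (hS : IsNNPath S) (q : ℕ → ℝ) :
    Hof N q S ≤ (Qpar N q true true) ^ 2 + (Qpar N q true false) ^ 2 +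
      (Qpar N q false true) ^ 2 + (Qpar N q false false) ^ 2 := by
  have hQpar (p s) := sum_sq_Qof_le_sq (N := N) (S := S) (parCharge_nonneg q p s)
  calc Hof N q S ≤ ∑ x ∈ (range N).image S,
        (Qof N (parCharge q true true) S x ^ 2 + Qof N (parCharge q true false) S x ^ 2 +
          Qof N (parCharge q false true) S x ^ 2 + Qof N (parCharge q false false) S x ^ 2) :=
        sum_le_sum fun x _ => hS.sq_Qof_le q x
    _ ≤ _ := by
      simp only [sum_add_distrib, Qpar_eq_sum_parCharge]
      gcongr ?_ + ?_ + ?_ + ?_ <;> apply hQpar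

end Path

lemma Hof_eq_sum_sq_of_injective {d : ℕ} {κ : Type*} [Fintype κ] [DecidableEq κ]
    {e : κ → Fin d → ℤ} (he : Function.Injective e) (c : ℕ → κ) (N : ℕ) (q : ℕ → ℝ) :
    Hof N q (fun i => e (c i)) = ∑ y, (∑ i ∈ range N, if c i = y then q i else 0) ^ 2 := by
  have hQof (y : κ) : Qof N q (fun i => e (c i)) (e y) =
      ∑ i ∈ range N, if c i = y then q i else 0 := by
    simp only [Qof, he.eq_iff]
  have himage : (range N).image (fun i => e (c i)) = ((range N).image c).image e := by
    rw [image_image]; rfl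
  rw [Hof, himage, sum_image fun y _ y' _ h => he h]
  simp only [hQof]
  refine sum_subset (subset_univ _) fun y _ hy => ?_
  have hne (i : ℕ) (hi : i ∈ range N) : c i ≠ y := fun h => hy (h ▸ mem_image_of_mem c hi)
  rw [sum_eq_zero fun i hi => if_neg (hne i hi), zero_pow two_ne_zero]

/-- Sends `(p, s)` to a vertex of the unit square whose coordinate sum has parity `p`;
vertices with different `p` are adjacent. -/
def squareVertex (d : ℕ) (v : Bool × Bool) : Fin d → ℤ := fun j =>
  if j.val = 0 then (xor v.1 v.2).toNat else if j.val = 1 then v.2.toNat else 0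

lemma squareVertex_injective {d : ℕ} (hd : 2 ≤ d) : Function.Injective (squareVertex d) := by
  rintro ⟨p, s⟩ ⟨p', s'⟩ h
  have h0 := congrFun h ⟨0, by omega⟩
  have h1 := congrFun h ⟨1, by omega⟩
  cases p <;> cases s <;> cases p' <;> cases s' <;> simp_all [squareVertex]

lemma isUnitStep_squareVertex_sub {d : ℕ} (hd : 2 ≤ d) (p s s' : Bool) :
    IsUnitStep (fun j => squareVertex d (!p, s') j - squareVertex d (p, s) j) := by
  rw [IsUnitStep, Fintype.sum_eq_add ⟨0, by omega⟩ ⟨1, by omega⟩ (by simp [Fin.ext_iff])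
    fun j ⟨h0, h1⟩ => by simp only [ne_eq, Fin.ext_iff] at h0 h1; simp [squareVertex, h0, h1]]
  cases p <;> cases s <;> cases s' <;> simp [squareVertex]

def chargeClass (q : ℕ → ℝ) (i : ℕ) : Bool × Bool := (i.bodd, decide (0 ≤ q i))

lemma ite_chargeClass_eq_true (q : ℕ → ℝ) (p : Bool) (i : ℕ) :
    (if chargeClass q i = (p, true) then q i else 0) = parCharge q p true i := by
  by_cases hq : 0 ≤ q i <;>
    simp [chargeClass, parCharge, Qsgn, mod_two_eq_ite_iff_bodd_eq, hq, le_of_not_ge]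

lemma ite_chargeClass_eq_false (q : ℕ → ℝ) (p : Bool) (i : ℕ) :
    (if chargeClass q i = (p, false) then q i else 0) = -parCharge q p false i := by
  by_cases hp : i.bodd = p <;> by_cases hq : 0 ≤ q i <;>
    simp [chargeClass, parCharge, Qsgn, mod_two_eq_ite_iff_bodd_eq, hp, hq, le_of_not_ge]

def squarePath (d : ℕ) (q : ℕ → ℝ) (i : ℕ) : Fin d → ℤ :=
  squareVertex d (chargeClass q i) - squareVertex d (chargeClass q 0)

lemma isNNPath_squarePath {d : ℕ} (hd : 2 ≤ d) (q : ℕ → ℝ) : IsNNPath (squarePath d q) := by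
  refine ⟨sub_self _, fun i => ?_⟩
  simp only [squarePath, Pi.sub_apply, sub_sub_sub_cancel_right, chargeClass, Nat.bodd_succ]
  exact isUnitStep_squareVertex_sub hd _ _ _

lemma Hof_squarePath {d : ℕ} (hd : 2 ≤ d) (N : ℕ) (q : ℕ → ℝ) :
    Hof N q (squarePath d q) = (Qpar N q true true) ^ 2 + (Qpar N q true false) ^ 2 +
      (Qpar N q false true) ^ 2 + (Qpar N q false false) ^ 2 := by
  have he : Function.Injective fun v => squareVertex d v - squareVertex d (chargeClass q 0) :=
    fun v w h => squareVertex_injective hd (sub_left_injective h)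
  rw [show Hof N q (squarePath d q) = _ from Hof_eq_sum_sq_of_injective he (chargeClass q) N q]
  simp only [Fintype.sum_prod_type, Fintype.sum_bool, ite_chargeClass_eq_true,
    ite_chargeClass_eq_false, sum_neg_distrib, neg_sq, Qpar_eq_sum_parCharge]
  ring

/-- if `d ≥ 2`, there is a nearest-neighbor path from `0`
achieving `H_N = (Q₊^odd)² + (Q₋^odd)² + (Q₊^even)² + (Q₋^even)²`, so that this
value is the maximum of `H_N` over all nearest-neighbor paths. -/
theorem exists_path_four_squares {d : ℕ} (hd : 2 ≤ d) (N : ℕ) (q : ℕ → ℝ) :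
    (∃ S : ℕ → Fin d → ℤ, IsNNPath S ∧
      Hof N q S = (Qpar N q true true) ^ 2 + (Qpar N q true false) ^ 2 +
        (Qpar N q false true) ^ 2 + (Qpar N q false false) ^ 2) ∧
    ∀ S : ℕ → Fin d → ℤ, IsNNPath S →
      Hof N q S ≤ (Qpar N q true true) ^ 2 + (Qpar N q true false) ^ 2 +
        (Qpar N q false true) ^ 2 + (Qpar N q false false) ^ 2 :=
  ⟨⟨squarePath d q, isNNPath_squarePath hd q, Hof_squarePath hd N q⟩, fun _ hS => hS.Hof_le q⟩
end
end

section
/- Let $\{q_i\}_{i\ge0}$ be i.i.d. real random variables and $\{S_i\}$ an independent simple random walk on $\mathbb{Z}^d$. If $d\ge 2$ and the quantity $\mathbb{E}q_0^+$ and $\mathbb{E}q_0^-$ are finite, then almost surely $\liminf_{N\to\infty}\frac1N\ln Z_N(\beta) \ge \beta\,\frac{(\mathbb{E}q_0^+)^2+(\mathbb{E}q_0^-)^2}{2} - \ln(2d)$ for every $\beta\in\mathbb{R}$, where $Z_N(\beta)=\mathbb{E}[\exp(\beta H_N/N)\mid q_0,\dots,q_{N-1}]$. -/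
open MeasureTheory ProbabilityTheory Filter Finset Real
open scoped ENNReal

noncomputable section

/-- `S` is a simple symmetric random walk on `ℤ^d` started at `0` under `P`:
each sequence of admissible increments has probability `(2d)⁻ⁿ`. -/
def IsSRW {Ω : Type*} [MeasurableSpace Ω] (P : Measure Ω) {d : ℕ}
    (S : ℕ → Ω → Fin d → ℤ) : Prop :=
  (∀ i, Measurable (S i)) ∧ (∀ ω, S 0 ω = 0) ∧
  ∀ (n : ℕ) (v : Fin n → Fin d → ℤ), (∀ i, IsUnitStep (v i)) →
    P {ω | ∀ i : Fin n, S (i + 1) ω - S i ω = v i} = (1 / (2 * d) : ℝ≥0∞) ^ n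

/-- Local time of the walk at site `x` up to time `N - 1`. -/
def locCount {Ω : Type*} {d : ℕ} (S : ℕ → Ω → Fin d → ℤ) (N : ℕ)
    (x : Fin d → ℤ) (ω : Ω) : ℕ :=
  ((Finset.range N).filter (fun i => S i ω = x)).card

/-- Quenched partition function of the charged polymer: the charges live on
`(Ωq, Pq)`, the walk on `(Ωs, Ps)`, and `Z N β ωq = E_S[exp(β H_N / N)]`. -/
def Zq {d : ℕ} {Ωq Ωs : Type*} [MeasurableSpace Ωs] (Ps : Measure Ωs)
    (q : ℕ → Ωq → ℝ) (S : ℕ → Ωs → Fin d → ℤ) (N : ℕ) (β : ℝ) (ωq : Ωq) : ℝ :=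
  ∫ ωs, Real.exp (β * Hof N (fun i => q i ωq) (fun i => S i ωs) / N) ∂Ps

open scoped Topology

/-!
Fix a realization of the charges. Restricting the walk to a single nearest-neighbour path `γ`
costs the factor `(2d)⁻ᴺ`, so `N⁻¹ log Z_N ≥ β H_N(γ) / N² - log (2d)`. Let `γ` alternate between
the sites `{0, e₁ + e₂}` at even times and `{e₁, e₂}` at odd times, choosing within each pair
according to the sign of the current charge. Then `H_N(γ)` is the sum of the squares of the four
partial sums of positive/negative charges at even/odd times, and by the strong law of large
numbers `H_N(γ) / N² → 2 (E q₀⁺ / 2)² + 2 (E q₀⁻ / 2)²`. Since `0 ≤ H_N ≤ (∑ |q_i|)²`, the sequence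
`N⁻¹ log Z_N` is bounded above, so its `liminf` is a genuine one.
-/

lemma isUnitStep_neg_iff {d : ℕ} {v : Fin d → ℤ} : IsUnitStep (-v) ↔ IsUnitStep v := by
  simp [IsUnitStep, abs_neg]

lemma isUnitStep_single {d : ℕ} (k : Fin d) : IsUnitStep (Pi.single k 1 : Fin d → ℤ) := by
  rw [IsUnitStep, Fintype.sum_eq_single k fun j hj => by simp [hj]]
  simp

lemma Qof_eq_zero_of_notMem {d N : ℕ} {q : ℕ → ℝ} {S : ℕ → Fin d → ℤ} {x : Fin d → ℤ}
    (hx : x ∉ (range N).image S) : Qof N q S x = 0 :=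
  sum_eq_zero fun i hi => if_neg fun h : S i = x => hx (h ▸ mem_image_of_mem S hi)

lemma Hof_eq_sum_of_subset {d N : ℕ} {q : ℕ → ℝ} {S : ℕ → Fin d → ℤ}
    {T : Finset (Fin d → ℤ)} (hT : (range N).image S ⊆ T) :
    Hof N q S = ∑ x ∈ T, Qof N q S x ^ 2 :=
  sum_subset hT fun x _ hx => by rw [Qof_eq_zero_of_notMem hx, sq, zero_mul]

lemma Hof_comp_of_injective {d N : ℕ} {L : Type*} [Fintype L] [DecidableEq L]
    {σ : L → Fin d → ℤ} (hσ : Function.Injective σ) (c : ℕ → L) (q : ℕ → ℝ) :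
    Hof N q (σ ∘ c) = ∑ l, (∑ i ∈ range N with c i = l, q i) ^ 2 := by
  classical
  rw [Hof_eq_sum_of_subset (T := univ.image σ), sum_image fun l _ l' _ h => hσ h]
  · refine sum_congr rfl fun l _ => ?_
    simp only [Qof, Function.comp_apply, hσ.eq_iff, sum_filter]
  · intro x hx
    obtain ⟨i, -, rfl⟩ := mem_image.mp hx
    exact mem_image_of_mem σ (mem_univ _)

lemma Hof_eq_sum_sum {d N : ℕ} (q : ℕ → ℝ) (S : ℕ → Fin d → ℤ) :
    Hof N q S = ∑ i ∈ range N, ∑ j ∈ range N, if S i = S j then q i * q j else 0 := by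
  classical
  simp only [Hof, Qof, sq, sum_mul_sum]
  rw [sum_comm]
  refine sum_congr rfl fun i hi => ?_
  rw [sum_comm]
  refine sum_congr rfl fun j _ => ?_
  rw [sum_eq_single_of_mem (S i) (mem_image_of_mem S hi) fun x _ hx => by simp [Ne.symm hx]]
  by_cases h : S i = S j <;> simp [h, eq_comm]

lemma Hof_congr {d N : ℕ} (q : ℕ → ℝ) {S S' : ℕ → Fin d → ℤ} (h : ∀ i < N, S i = S' i) :
    Hof N q S = Hof N q S' := by
  simp only [Hof_eq_sum_sum]
  exact sum_congr rfl fun i hi => sum_congr rfl fun j hj => by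
    rw [h i (mem_range.mp hi), h j (mem_range.mp hj)]

lemma Hof_nonneg {d N : ℕ} (q : ℕ → ℝ) (S : ℕ → Fin d → ℤ) : 0 ≤ Hof N q S :=
  sum_nonneg fun _ _ => sq_nonneg _

lemma Hof_le_sq_sum_abs {d N : ℕ} (q : ℕ → ℝ) (S : ℕ → Fin d → ℤ) :
    Hof N q S ≤ (∑ i ∈ range N, |q i|) ^ 2 := by
  rw [Hof_eq_sum_sum, sq, sum_mul_sum]
  refine sum_le_sum fun i _ => sum_le_sum fun j _ => ?_
  split_ifs
  · rw [← abs_mul]; exact le_abs_self _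
  · positivity

lemma measurable_Hof {d N : ℕ} {Ω : Type*} [MeasurableSpace Ω] {S : ℕ → Ω → Fin d → ℤ}
    (hS : ∀ i, Measurable (S i)) (q : ℕ → ℝ) :
    Measurable fun ω => Hof N q (fun i => S i ω) := by
  simp only [Hof_eq_sum_sum]
  exact Finset.measurable_sum _ fun i _ => Finset.measurable_sum _ fun j _ =>
    Measurable.ite (measurableSet_eq_fun (hS i) (hS j)) measurable_const measurable_const

section Walk

variable {Ω : Type*} [MeasurableSpace Ω] {P : Measure Ω} {d : ℕ} {S : ℕ → Ω → Fin d → ℤ}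

lemma IsSRW.eq_of_increments_eq (hS : IsSRW P S) {γ : ℕ → Fin d → ℤ} (hγ : γ 0 = 0) {n : ℕ}
    {ω : Ω} (hω : ∀ i : Fin n, S (i + 1) ω - S i ω = γ (i + 1) - γ i) :
    ∀ i ≤ n, S i ω = γ i := by
  intro i hi
  induction i with
  | zero => rw [hS.2.1 ω, hγ]
  | succ i ih =>
    have := hω ⟨i, hi⟩
    rw [ih (by omega)] at this
    simpa using this

lemma IsSRW.pow_mul_le_integral (hS : IsSRW P S) {γ : ℕ → Fin d → ℤ} (hγ0 : γ 0 = 0)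
    (hγ : ∀ i, IsUnitStep (γ (i + 1) - γ i)) (n : ℕ) {F : (ℕ → Fin d → ℤ) → ℝ}
    (hF0 : ∀ γ', 0 ≤ F γ') (hFγ : ∀ γ', (∀ i ≤ n, γ' i = γ i) → F γ' = F γ)
    (hFi : Integrable (fun ω => F fun i => S i ω) P) :
    (1 / (2 * d) : ℝ) ^ n * F γ ≤ ∫ ω, F (fun i => S i ω) ∂P := by
  set E := {ω | ∀ i : Fin n, S (i + 1) ω - S i ω = γ (i + 1) - γ i}
  have hEm : MeasurableSet E := by
    simp only [E, Set.ofPred_forall]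
    exact MeasurableSet.iInter fun i =>
      measurableSet_eq_fun ((hS.1 _).sub (hS.1 _)) measurable_const
  have hPE : P.real E = (1 / (2 * d) : ℝ) ^ n := by
    rw [measureReal_def, hS.2.2 n _ fun i => hγ i, ENNReal.toReal_pow, ENNReal.toReal_div]
    simp
  calc (1 / (2 * d) : ℝ) ^ n * F γ = ∫ ω in E, F γ ∂P := by
        rw [setIntegral_const, smul_eq_mul, hPE]
    _ = ∫ ω in E, F (fun i => S i ω) ∂P :=
        setIntegral_congr_fun hEm fun ω hω => (hFγ _ (hS.eq_of_increments_eq hγ0 hω)).symm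
    _ ≤ ∫ ω, F (fun i => S i ω) ∂P := setIntegral_le_integral hFi (ae_of_all _ fun ω => hF0 _)

end Walk

lemma exp_Hof_le {d N : ℕ} (q : ℕ → ℝ) (S : ℕ → Fin d → ℤ) (β : ℝ) :
    exp (β * Hof N q S / N) ≤ exp (|β| * (∑ i ∈ range N, |q i|) ^ 2 / N) := by
  refine exp_le_exp.mpr (div_le_div_of_nonneg_right ?_ N.cast_nonneg)
  calc β * Hof N q S ≤ |β| * Hof N q S := by gcongr; exacts [Hof_nonneg q S, le_abs_self β]
    _ ≤ |β| * (∑ i ∈ range N, |q i|) ^ 2 := by gcongr; exact Hof_le_sq_sum_abs q S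

section PartitionFunction

variable {d : ℕ} {Ωq Ωs : Type*} [MeasurableSpace Ωs] {Ps : Measure Ωs} [IsProbabilityMeasure Ps]
  {S : ℕ → Ωs → Fin d → ℤ}

lemma integrable_exp_Hof (hS : ∀ i, Measurable (S i)) (N : ℕ) (q : ℕ → ℝ) (β : ℝ) :
    Integrable (fun ω => exp (β * Hof N q (fun i => S i ω) / N)) Ps :=
  .of_bound (((measurable_Hof hS q).const_mul β).div_const _).exp.aestronglyMeasurable _
    (ae_of_all _ fun ω => by
      rw [norm_of_nonneg (exp_pos _).le]; exact exp_Hof_le q _ β)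

lemma Zq_pos (hS : ∀ i, Measurable (S i)) (q : ℕ → Ωq → ℝ) (N : ℕ) (β : ℝ) (ωq : Ωq) :
    0 < Zq Ps q S N β ωq :=
  integral_exp_pos (integrable_exp_Hof hS N _ β)

lemma log_Zq_div_le (hS : ∀ i, Measurable (S i)) (q : ℕ → Ωq → ℝ) (N : ℕ) (β : ℝ) (ωq : Ωq) :
    log (Zq Ps q S N β ωq) / N ≤ |β| * ((∑ i ∈ range N, |q i ωq|) / N) ^ 2 := by
  have hZ : Zq Ps q S N β ωq ≤ exp (|β| * (∑ i ∈ range N, |q i ωq|) ^ 2 / N) := by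
    refine (integral_mono_of_nonneg (ae_of_all _ fun _ => (exp_pos _).le) (integrable_const _)
      (ae_of_all _ fun ωs => exp_Hof_le _ _ β)).trans_eq ?_
    simp
  calc log (Zq Ps q S N β ωq) / N ≤ |β| * (∑ i ∈ range N, |q i ωq|) ^ 2 / N / N := by
        gcongr
        exact (log_le_log (Zq_pos hS q N β ωq) hZ).trans_eq (log_exp _)
    _ = |β| * ((∑ i ∈ range N, |q i ωq|) / N) ^ 2 := by ring

lemma IsSRW.le_log_Zq_div (hS : IsSRW Ps S) {γ : ℕ → Fin d → ℤ} (hγ0 : γ 0 = 0)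
    (hγ : ∀ i, IsUnitStep (γ (i + 1) - γ i)) {N : ℕ} (hN : N ≠ 0) (q : ℕ → Ωq → ℝ) (β : ℝ)
    (ωq : Ωq) :
    β * (Hof N (fun i => q i ωq) γ / N ^ 2) - log (2 * d) ≤ log (Zq Ps q S N β ωq) / N := by
  have hd : d ≠ 0 := by rintro rfl; simpa [IsUnitStep] using hγ 0
  have hZ := hS.pow_mul_le_integral hγ0 hγ N (F := fun γ' => exp (β * Hof N (q · ωq) γ' / N))
    (fun _ => (exp_pos _).le) (fun γ' h => by rw [Hof_congr _ fun i hi => h i hi.le])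
    (integrable_exp_Hof hS.1 N _ β)
  have hlog := log_le_log (by positivity) hZ
  rw [log_mul (by positivity) (exp_pos _).ne', log_pow, log_exp, one_div, log_inv] at hlog
  rw [le_div_iff₀ (by positivity)]
  refine le_of_eq_of_le ?_ hlog
  field_simp
  ring

end PartitionFunction

def signPart (s : Bool) (x : ℝ) : ℝ := if s then max x 0 else -max (-x) 0

lemma measurable_signPart (s : Bool) : Measurable (signPart s) := by
  unfold signPart; cases s <;> simp only [Bool.false_eq_true, if_true, if_false] <;> fun_prop

lemma MeasureTheory.Integrable.signPart_comp {Ω : Type*} [MeasurableSpace Ω] {P : Measure Ω}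
    {X : Ω → ℝ} (hX : Integrable X P) (s : Bool) :
    Integrable (fun ω => signPart s (X ω)) P := by
  cases s <;> simp only [signPart, Bool.false_eq_true, if_true, if_false]
  exacts [hX.neg_part.neg, hX.pos_part]

lemma ite_decide_nonneg_eq_signPart (s : Bool) (x : ℝ) :
    (if decide (0 ≤ x) = s then x else 0) = signPart s x := by
  by_cases hx : 0 ≤ x
  · cases s <;> simp [signPart, hx]
  · have hx' : x ≤ 0 := by linarith
    cases s <;> simp [signPart, hx, hx']

section SortingPath

variable {d : ℕ}

/-- Indexed by (time is odd, charge is nonnegative). The sign class `b` of even times is put at the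
origin, so that the path through these sites can start there. -/
def sortingSite (e₁ e₂ : Fin d → ℤ) (b : Bool) : Bool × Bool → Fin d → ℤ
  | (false, s) => if s = b then 0 else e₁ + e₂
  | (true, s) => if s then e₁ else e₂

def sortingPath (e₁ e₂ : Fin d → ℤ) (q : ℕ → ℝ) (i : ℕ) : Fin d → ℤ :=
  sortingSite e₁ e₂ (decide (0 ≤ q 0)) (i.bodd, decide (0 ≤ q i))

lemma sortingPath_zero (e₁ e₂ : Fin d → ℤ) (q : ℕ → ℝ) : sortingPath e₁ e₂ q 0 = 0 := by
  simp [sortingPath, sortingSite]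

lemma isUnitStep_sortingPath_succ {e₁ e₂ : Fin d → ℤ} (h₁ : IsUnitStep e₁) (h₂ : IsUnitStep e₂)
    (q : ℕ → ℝ) (i : ℕ) : IsUnitStep (sortingPath e₁ e₂ q (i + 1) - sortingPath e₁ e₂ q i) := by
  simp only [sortingPath, Nat.bodd_succ]
  generalize i.bodd = r, decide (0 ≤ q i) = s, decide (0 ≤ q (i + 1)) = s', decide (0 ≤ q 0) = b
  cases r <;> cases s <;> cases s' <;> cases b <;> simp [sortingSite, isUnitStep_neg_iff, h₁, h₂]

lemma injective_sortingSite {k₀ k₁ : Fin d} (hk : k₀ ≠ k₁) (b : Bool) :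
    Function.Injective (sortingSite (Pi.single k₀ 1) (Pi.single k₁ 1) b) := by
  rintro ⟨r, s⟩ ⟨r', s'⟩ h
  have h₀ := congrFun h k₀
  have h₁ := congrFun h k₁
  cases r <;> cases r' <;> cases s <;> cases s' <;> cases b <;>
    simp [sortingSite, hk, hk.symm] at h₀ h₁ ⊢

lemma Hof_sortingPath {k₀ k₁ : Fin d} (hk : k₀ ≠ k₁) (q : ℕ → ℝ) (N : ℕ) :
    Hof N q (sortingPath (Pi.single k₀ 1) (Pi.single k₁ 1) q) =
      ∑ r : Bool, ∑ s : Bool, (∑ i ∈ range N with i.bodd = r, signPart s (q i)) ^ 2 := by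
  rw [show sortingPath _ _ q = sortingSite _ _ _ ∘ fun i => (i.bodd, decide (0 ≤ q i)) from rfl,
    Hof_comp_of_injective (injective_sortingSite hk _), Fintype.sum_prod_type]
  simp only [Prod.mk.injEq, ← filter_filter, sum_filter, ite_decide_nonneg_eq_signPart]

end SortingPath

lemma sum_range_filter_bodd (u : ℕ → ℝ) (N : ℕ) (r : Bool) :
    ∑ i ∈ range N with i.bodd = r, u i =
      ∑ k ∈ range ((N + (1 - r.toNat)) / 2), u (2 * k + r.toNat) := by
  have hr : r.toNat ≤ 1 := by cases r <;> simp
  have hbodd : ∀ i, i.bodd = r ↔ i % 2 = r.toNat := fun i => by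
    rw [Nat.mod_two_of_bodd]; cases i.bodd <;> cases r <;> simp
  rw [← sum_image (f := u) (g := fun k => 2 * k + r.toNat) fun k _ k' _ h => by simpa using h]
  congr 1
  ext i
  simp only [mem_filter, mem_range, mem_image, hbodd]
  constructor
  · rintro ⟨hi, hr'⟩
    exact ⟨i / 2, by omega, by omega⟩
  · rintro ⟨k, hk, rfl⟩
    omega

lemma tendsto_natCast_add_div_two_div (m : ℕ) :
    Tendsto (fun N : ℕ => (((N + m) / 2 : ℕ) : ℝ) / N) atTop (𝓝 (1 / 2)) := by
  have hlo : Tendsto (fun N : ℕ => 1 / 2 - (1 / 2 : ℝ) / N) atTop (𝓝 (1 / 2)) := by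
    simpa using tendsto_const_nhds.sub (tendsto_const_div_atTop_nhds_zero_nat (1 / 2 : ℝ))
  have hhi : Tendsto (fun N : ℕ => 1 / 2 + (m / 2 : ℝ) / N) atTop (𝓝 (1 / 2)) := by
    simpa using tendsto_const_nhds.add (tendsto_const_div_atTop_nhds_zero_nat (m / 2 : ℝ))
  refine tendsto_of_tendsto_of_tendsto_of_le_of_le' hlo hhi ?_ ?_ <;>
    filter_upwards [eventually_gt_atTop 0] with N hN
  all_goals
    have hN' : (0 : ℝ) < N := by exact_mod_cast hN
    have h₁ : ((N + m : ℕ) : ℝ) ≤ 2 * (((N + m) / 2 : ℕ) : ℝ) + 1 := by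
      exact_mod_cast (by omega : N + m ≤ 2 * ((N + m) / 2) + 1)
    have h₂ : 2 * (((N + m) / 2 : ℕ) : ℝ) ≤ ((N + m : ℕ) : ℝ) := by
      exact_mod_cast Nat.mul_div_le (N + m) 2
    push_cast at h₁ h₂
    field_simp
    linarith [(m.cast_nonneg : (0 : ℝ) ≤ m)]

lemma Filter.Tendsto.div_natCast_comp {s : ℕ → ℝ} {L κ : ℝ} {c : ℕ → ℕ}
    (hs : Tendsto (fun M : ℕ => s M / M) atTop (𝓝 L)) (hc : Tendsto c atTop atTop)
    (hcN : Tendsto (fun N : ℕ => (c N : ℝ) / N) atTop (𝓝 κ)) :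
    Tendsto (fun N : ℕ => s (c N) / N) atTop (𝓝 (L * κ)) := by
  refine ((hs.comp hc).mul hcN).congr' ?_
  filter_upwards [hc.eventually_gt_atTop 0] with N hN
  have : (c N : ℝ) ≠ 0 := by positivity
  simp only [Function.comp_apply]
  field_simp

lemma tendsto_sum_filter_bodd_div {u : ℕ → ℝ} {L : ℝ} (r : Bool)
    (h : Tendsto (fun M : ℕ => (∑ k ∈ range M, u (2 * k + r.toNat)) / M) atTop (𝓝 L)) :
    Tendsto (fun N : ℕ => (∑ i ∈ range N with i.bodd = r, u i) / N) atTop (𝓝 (L / 2)) := by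
  have hc : Tendsto (fun N => (N + (1 - r.toNat)) / 2) atTop atTop :=
    tendsto_atTop_mono (fun N => Nat.div_le_div_right (Nat.le_add_right _ _))
      (Nat.tendsto_div_const_atTop two_ne_zero)
  simpa only [sum_range_filter_bodd, div_eq_mul_one_div L 2] using
    h.div_natCast_comp hc (tendsto_natCast_add_div_two_div _)

section StrongLaw

variable {Ω : Type*} [MeasurableSpace Ω] {P : Measure Ω} {q : ℕ → Ω → ℝ} {f : ℝ → ℝ}

lemma ae_tendsto_sum_comp_div (hindep : iIndepFun q P)
    (hident : ∀ i, IdentDistrib (q i) (q 0) P P) (hf : Measurable f)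
    (hfi : Integrable (fun ω => f (q 0 ω)) P) {φ : ℕ → ℕ} (hφ : φ.Injective) :
    ∀ᵐ ω ∂P, Tendsto (fun M : ℕ => (∑ k ∈ range M, f (q (φ k) ω)) / M) atTop
      (𝓝 (∫ ω, f (q 0 ω) ∂P)) := by
  have hX : ∀ k, IdentDistrib (fun ω => f (q (φ k) ω)) (fun ω => f (q 0 ω)) P P :=
    fun k => (hident _).comp hf
  have := strong_law_ae_real (fun k ω => f (q (φ k) ω)) ((hX 0).integrable_iff.mpr hfi)
    (fun i j hij => (hindep.indepFun (hφ.ne hij)).comp hf hf)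
    fun k => (hX k).trans (hX 0).symm
  rwa [(hX 0).integral_eq] at this

lemma ae_tendsto_sum_filter_bodd_div (hindep : iIndepFun q P)
    (hident : ∀ i, IdentDistrib (q i) (q 0) P P) (hf : Measurable f)
    (hfi : Integrable (fun ω => f (q 0 ω)) P) (r : Bool) :
    ∀ᵐ ω ∂P, Tendsto (fun N : ℕ => (∑ i ∈ range N with i.bodd = r, f (q i ω)) / N) atTop
      (𝓝 ((∫ ω, f (q 0 ω) ∂P) / 2)) := by
  filter_upwards [ae_tendsto_sum_comp_div hindep hident hf hfi
    (φ := fun k => 2 * k + r.toNat) fun k k' h => by simpa using h] with ω hω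
  exact tendsto_sum_filter_bodd_div r hω

end StrongLaw

lemma tendsto_Hof_sortingPath_div {d : ℕ} {k₀ k₁ : Fin d} (hk : k₀ ≠ k₁) {q : ℕ → ℝ}
    {A : Bool → ℝ} (h : ∀ r s, Tendsto (fun N : ℕ => (∑ i ∈ range N with i.bodd = r,
      signPart s (q i)) / N) atTop (𝓝 (A s / 2))) :
    Tendsto (fun N : ℕ => Hof N q (sortingPath (Pi.single k₀ 1) (Pi.single k₁ 1) q) / N ^ 2)
      atTop (𝓝 ((A true ^ 2 + A false ^ 2) / 2)) := by
  simp_rw [Hof_sortingPath hk, sum_div, ← div_pow]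
  convert tendsto_finsetSum univ fun r _ => tendsto_finsetSum univ fun s _ => (h r s).pow 2
    using 2
  simp only [Fintype.sum_bool]
  ring

lemma Filter.Tendsto.le_liminf_of_le {ι : Type*} {l : Filter ι} [l.NeBot] {u v : ι → ℝ} {L : ℝ}
    (hv : Tendsto v l (𝓝 L)) (hvu : ∀ᶠ i in l, v i ≤ u i) (hu : IsBoundedUnder (· ≤ ·) l u) :
    L ≤ liminf u l :=
  hv.liminf_eq ▸ liminf_le_liminf hvu hv.isBoundedUnder_ge hu.isCoboundedUnder_ge

/-- for i.i.d. integrable charges and `d ≥ 2`, almost surely, for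
every `β`, `liminf N⁻¹ ln Z_N(β) ≥ β((E q₀⁺)² + (E q₀⁻)²)/2 - ln(2d)`. -/
theorem liminf_logZ_ge {d : ℕ} (hd : 2 ≤ d) {Ωq Ωs : Type*}
    [MeasurableSpace Ωq] [MeasurableSpace Ωs]
    (Pq : Measure Ωq) [IsProbabilityMeasure Pq]
    (Ps : Measure Ωs) [IsProbabilityMeasure Ps]
    (q : ℕ → Ωq → ℝ) (hqm : ∀ i, Measurable (q i))
    (hindep : iIndepFun q Pq)
    (hident : ∀ i, Measure.map (q i) Pq = Measure.map (q 0) Pq)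
    (hint : Integrable (q 0) Pq)
    (S : ℕ → Ωs → Fin d → ℤ) (hS : IsSRW Ps S) :
    ∀ᵐ ωq ∂Pq, ∀ β : ℝ,
      β * ((∫ ω', max (q 0 ω') 0 ∂Pq) ^ 2 + (∫ ω', max (-q 0 ω') 0 ∂Pq) ^ 2) / 2
          - Real.log (2 * d) ≤
        atTop.liminf (fun N : ℕ => Real.log (Zq Ps q S N β ωq) / N) := by
  have hk : (⟨0, by omega⟩ : Fin d) ≠ ⟨1, by omega⟩ := by simp
  have hid : ∀ i, IdentDistrib (q i) (q 0) Pq Pq :=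
    fun i => ⟨(hqm i).aemeasurable, (hqm 0).aemeasurable, hident i⟩
  have hparts := ae_all_iff.2 fun r => ae_all_iff.2 fun s =>
    ae_tendsto_sum_filter_bodd_div hindep hid (measurable_signPart s) (hint.signPart_comp s) r
  have habs := ae_tendsto_sum_comp_div hindep hid measurable_abs hint.abs Function.injective_id
  filter_upwards [hparts, habs] with ωq hparts habs β
  set γ := sortingPath (Pi.single _ 1) (Pi.single _ 1) (q · ωq)
  have hH := tendsto_Hof_sortingPath_div hk hparts
  simp only [signPart, if_true, Bool.false_eq_true, if_false, integral_neg, neg_sq] at hH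
  refine Tendsto.le_liminf_of_le
    (v := fun N : ℕ => β * (Hof N (q · ωq) γ / N ^ 2) - log (2 * d)) ?_ ?_ ?_
  · rw [mul_div_assoc]
    exact (hH.const_mul β).sub_const _
  · filter_upwards [eventually_ne_atTop 0] with N hN
    exact hS.le_log_Zq_div (sortingPath_zero _ _ _)
      (isUnitStep_sortingPath_succ (isUnitStep_single _) (isUnitStep_single _) _) hN q β ωq
  · exact ((habs.pow 2).const_mul |β|).isBoundedUnder_le.mono_le
      (.of_forall fun N => log_Zq_div_le hS.1 q N β ωq)
end
end
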